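/- arXiv:2202.06087 — 7 statements merged into one kernel-verified Lean document; each statement's English description precedes it below -/
import Mathlib

section
/- Let A be a matrix over the field with two elements F₂ with at least n non-zero entries, such that each row and each column contains at most M non-zero entries. Then the rank of A over F₂ is at least n/M². -/
/-!
Choose at most `rank A` columns spanning the column space. A row vanishing on all of them
vanishes on every column, so each non-zero row meets one of the chosen columns; these
columns meet at most `M · rank A` rows in total, and each row carries at most `M` non-zero
entries.
-/

open Finset Submodule

theorem apply_eq_zero_of_mem_span {ι R : Type*} [Semiring R] {S : Set (ι → R)} {i : ι}
    (hS : ∀ v ∈ S, v i = 0) {v : ι → R} (hv : v ∈ span R S) : v i = 0 :=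
  span_le (p := LinearMap.ker (LinearMap.proj i)) |>.mpr hS hv

namespace Matrix

variable {m k K : Type*} [Fintype m] [Fintype k]

theorem exists_finset_card_le_rank_col_mem_span [Field K] (A : Matrix m k K) :
    ∃ J : Finset k, #J ≤ A.rank ∧ ∀ j, A.col j ∈ span K (A.col '' J) := by
  classical
  obtain ⟨J, -, -, hspan, hli⟩ :=
    exists_linearIndepOn_extension (linearIndepOn_empty K A.col) (Set.subset_univ ∅)
  refine ⟨J.toFinset, ?_, fun j => by simpa using hspan ⟨j, Set.mem_univ j, rfl⟩⟩
  calc #J.toFinset = Module.finrank K (span K (Set.range fun j : J => A.col j)) := by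
        rw [finrank_span_eq_card hli, Set.toFinset_card]
    _ ≤ A.rank := by
        rw [rank_eq_finrank_span_cols]
        exact Submodule.finrank_mono (span_mono (Set.range_comp_subset_range _ _))

theorem exists_finset_card_le_rank_forall_ne_zero_exists_mem_ne_zero [Field K]
    (A : Matrix m k K) :
    ∃ J : Finset k, #J ≤ A.rank ∧ ∀ i j, A i j ≠ 0 → ∃ j' ∈ J, A i j' ≠ 0 := by
  obtain ⟨J, hJ, hspan⟩ := A.exists_finset_card_le_rank_col_mem_span
  refine ⟨J, hJ, fun i j hij => ?_⟩
  by_contra! hrowJ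
  exact hij <| apply_eq_zero_of_mem_span (S := A.col '' J)
    (by rintro _ ⟨j', hj', rfl⟩; exact hrowJ j' hj') (hspan j)

theorem card_ne_zero_le_mul_card_of_forall_ne_zero_mem [Zero K] [DecidableEq K]
    {A : Matrix m k K} {M : ℕ} {R : Finset m} (hR : ∀ i j, A i j ≠ 0 → i ∈ R)
    (hrow : ∀ i, #{j | A i j ≠ 0} ≤ M) :
    #{p : m × k | A p.1 p.2 ≠ 0} ≤ M * #R := by
  classical
  refine card_le_mul_card_image_of_maps_to (f := Prod.fst)
    (fun p hp => hR p.1 p.2 (mem_filter.1 hp).2) M fun i _ => ?_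
  calc #{p ∈ {p : m × k | A p.1 p.2 ≠ 0} | p.1 = i}
      ≤ #{j | A i j ≠ 0} := by
        refine card_le_card_of_injOn Prod.snd (fun p hp => ?_) fun p hp q hq hpq => ?_
        · simp only [coe_filter, mem_filter, mem_univ, true_and, Set.mem_ofPred_eq] at hp ⊢
          exact hp.2 ▸ hp.1
        · simp only [coe_filter, Set.mem_ofPred_eq] at hp hq
          exact Prod.ext (hp.2.trans hq.2.symm) hpq
    _ ≤ M := hrow i

theorem card_ne_zero_le_sq_mul_rank [Field K] [DecidableEq K] (A : Matrix m k K) {M : ℕ}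
    (hrow : ∀ i, #{j | A i j ≠ 0} ≤ M) (hcol : ∀ j, #{i | A i j ≠ 0} ≤ M) :
    #{p : m × k | A p.1 p.2 ≠ 0} ≤ M ^ 2 * A.rank := by
  classical
  obtain ⟨J, hJ, hmeet⟩ := A.exists_finset_card_le_rank_forall_ne_zero_exists_mem_ne_zero
  set R := J.biUnion fun j => ({i | A i j ≠ 0} : Finset m)
  have hR : ∀ i j, A i j ≠ 0 → i ∈ R := fun i j hij => by
    obtain ⟨j', hj', hij'⟩ := hmeet i j hij
    exact mem_biUnion.2 ⟨j', hj', by simpa using hij'⟩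
  calc #{p : m × k | A p.1 p.2 ≠ 0} ≤ M * #R :=
        card_ne_zero_le_mul_card_of_forall_ne_zero_mem hR hrow
    _ ≤ M * (#J * M) := Nat.mul_le_mul_left M (card_biUnion_le_card_mul _ _ _ fun j _ => hcol j)
    _ = M ^ 2 * #J := by ring
    _ ≤ M ^ 2 * A.rank := Nat.mul_le_mul_left _ hJ

end Matrix

theorem stmt1_general {m k : Type*} [Fintype m] [Fintype k]
    (A : Matrix m k (ZMod 2)) (n M : ℕ)
    (hnonzero : n ≤ (Finset.univ.filter (fun p : m × k => A p.1 p.2 ≠ 0)).card)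
    (hrow : ∀ i : m, (Finset.univ.filter (fun j : k => A i j ≠ 0)).card ≤ M)
    (hcol : ∀ j : k, (Finset.univ.filter (fun i : m => A i j ≠ 0)).card ≤ M) :
    n ≤ M ^ 2 * A.rank :=
  hnonzero.trans (A.card_ne_zero_le_sq_mul_rank hrow hcol)

/-- A matrix over `F₂` with at least `n` non-zero entries and at most `M`
non-zero entries in each row and column has rank at least `n / M²`
(equivalently, `n ≤ M² · rank`). -/
theorem stmt1 {m k : Type*} [Fintype m] [Fintype k] [DecidableEq m] [DecidableEq k]
    (A : Matrix m k (ZMod 2)) (n M : ℕ)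
    (hnonzero : n ≤ (Finset.univ.filter (fun p : m × k => A p.1 p.2 ≠ 0)).card)
    (hrow : ∀ i : m, (Finset.univ.filter (fun j : k => A i j ≠ 0)).card ≤ M)
    (hcol : ∀ j : k, (Finset.univ.filter (fun i : m => A i j ≠ 0)).card ≤ M) :
    n ≤ M ^ 2 * A.rank :=
  stmt1_general A n M hnonzero hrow hcol
end

section
/- For all natural numbers m and k with 1 ≤ k ≤ m/2, the sum of binomial coefficients ∑_{i=1}^{k} C(m,i) is at most 2^{h(k/m)·m}, where h(x) = −x·log₂(x) − (1−x)·log₂(1−x) is the binary entropy function. -/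
/-- For natural numbers `1 ≤ k ≤ m/2`, the sum `∑_{i=1}^{k} C(m,i)` is at
most `2^(h(k/m)·m)`, where `h(x) = -x·log₂ x - (1-x)·log₂(1-x)` is the binary entropy
function. -/
theorem stmt5 (m k : ℕ) (hk : 1 ≤ k) (hkm : 2 * k ≤ m) :
    ((∑ i ∈ Finset.Icc 1 k, m.choose i : ℕ) : ℝ)
      ≤ (2 : ℝ) ^ (((-((k : ℝ) / m * Real.logb 2 ((k : ℝ) / m))
          - (1 - (k : ℝ) / m) * Real.logb 2 (1 - (k : ℝ) / m)) * m)) := by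
  have hm : 0 < m := by omega
  have hm' : (0 : ℝ) < m := by exact_mod_cast hm
  set p : ℝ := (k : ℝ) / m with hpdef
  have hp0 : 0 < p := by positivity
  have hpm : p * m = (k : ℝ) := div_mul_cancel₀ _ hm'.ne'
  have hp1 : p ≤ 1/2 := by
    rw [hpdef, div_le_iff₀ hm']
    have : (2:ℝ) * k ≤ m := by exact_mod_cast hkm
    linarith
  have hq0 : 0 < 1 - p := by linarith
  have hpq : p ≤ 1 - p := by linarith
  have hqm : (1 - p) * m = (m : ℝ) - k := by rw [sub_mul, hpm, one_mul]
  have hkmle : k ≤ m := by omega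
  have hbin : ∑ i ∈ Finset.range (m + 1), p ^ i * (1 - p) ^ (m - i) * m.choose i = 1 := by
    rw [← add_pow]
    norm_num
  have hsub : Finset.Icc 1 k ⊆ Finset.range (m + 1) := by
    intro i hi
    simp only [Finset.mem_Icc] at hi
    simp only [Finset.mem_range]
    omega
  have hle1 : ∑ i ∈ Finset.Icc 1 k, p ^ i * (1 - p) ^ (m - i) * m.choose i ≤ 1 := by
    refine le_of_le_of_eq ?_ hbin
    apply Finset.sum_le_sum_of_subset_of_nonneg hsub
    intro i _ _
    positivity
  have hterm : ∀ i ∈ Finset.Icc 1 k,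
      (m.choose i : ℝ) * (p ^ k * (1 - p) ^ (m - k)) ≤ p ^ i * (1 - p) ^ (m - i) * m.choose i := by
    intro i hi
    simp only [Finset.mem_Icc] at hi
    rw [mul_comm]
    apply mul_le_mul_of_nonneg_right _ (by positivity)
    have h1 : p ^ k = p ^ i * p ^ (k - i) := by rw [← pow_add]; congr 1; omega
    have h2 : (1 - p) ^ (m - i) = (1 - p) ^ (k - i) * (1 - p) ^ (m - k) := by
      rw [← pow_add]; congr 1; omega
    have h3 : p ^ (k - i) ≤ (1 - p) ^ (k - i) := pow_le_pow_left₀ hp0.le hpq _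
    rw [h1, h2, mul_assoc]
    have := mul_le_mul_of_nonneg_left
      (mul_le_mul_of_nonneg_right h3 (pow_nonneg hq0.le (m - k))) (pow_nonneg hp0.le i)
    linarith [this]
  have hc : (0:ℝ) < p ^ k * (1 - p) ^ (m - k) := by positivity
  have hS : ((∑ i ∈ Finset.Icc 1 k, m.choose i : ℕ) : ℝ) * (p ^ k * (1 - p) ^ (m - k)) ≤ 1 := by
    push_cast
    rw [Finset.sum_mul]
    exact le_trans (Finset.sum_le_sum hterm) hle1
  have hSle : ((∑ i ∈ Finset.Icc 1 k, m.choose i : ℕ) : ℝ)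
      ≤ (p ^ k * (1 - p) ^ (m - k))⁻¹ := by
    have := (le_div_iff₀ hc).mpr hS
    simpa [one_div] using this
  have hrhs : (2 : ℝ) ^ ((-(p * Real.logb 2 p) - (1 - p) * Real.logb 2 (1 - p)) * m)
      = (p ^ k * (1 - p) ^ (m - k))⁻¹ := by
    have e0 : (-(p * Real.logb 2 p) - (1 - p) * Real.logb 2 (1 - p)) * m
        = -(p * m * Real.logb 2 p) - ((1 - p) * m) * Real.logb 2 (1 - p) := by ring
    have e1 : (-(p * Real.logb 2 p) - (1 - p) * Real.logb 2 (1 - p)) * m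
        = Real.logb 2 p * (-(k : ℝ)) + Real.logb 2 (1 - p) * (-((m : ℝ) - k)) := by
      rw [e0, hpm, hqm]; ring
    rw [e1, Real.rpow_add (by norm_num), Real.rpow_mul (by norm_num),
      Real.rpow_mul (by norm_num), Real.rpow_logb (by norm_num) (by norm_num) hp0,
      Real.rpow_logb (by norm_num) (by norm_num) hq0]
    have hmk : ((m : ℝ) - k) = ((m - k : ℕ) : ℝ) := by
      push_cast [hkmle]; ring
    rw [Real.rpow_neg hp0.le, Real.rpow_neg hq0.le, hmk,
      Real.rpow_natCast, Real.rpow_natCast, mul_inv]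
  rw [hrhs]
  exact hSle
end

section
/- Let X be a binomial random variable with parameters n and p, let K > 0 satisfy 2enp < K, and set Y = min{X, K}. Then E(Y) ≥ np − K·2^{−K}. -/
open Finset

lemma binom_sum_one (m : ℕ) (p : ℝ) :
    ∑ i ∈ Finset.range (m + 1), (m.choose i : ℝ) * p ^ i * (1 - p) ^ (m - i) = 1 := by
  have h := add_pow p (1 - p) m
  simp only [add_sub_cancel, one_pow] at h
  refine Eq.trans ?_ h.symm
  exact Finset.sum_congr rfl fun i _ => by ring

lemma binom_mean (n : ℕ) (p : ℝ) :
    ∑ j ∈ Finset.range (n + 1), (n.choose j : ℝ) * p ^ j * (1 - p) ^ (n - j) * j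
      = n * p := by
  cases n with
  | zero => simp
  | succ m =>
    rw [Finset.sum_range_succ']
    simp only [Nat.cast_zero, mul_zero, add_zero]
    have key : ∀ i ∈ Finset.range (m + 1),
        ((m+1).choose (i+1) : ℝ) * p ^ (i+1) * (1 - p) ^ (m + 1 - (i+1)) * ((i+1 : ℕ) : ℝ)
          = ((m+1 : ℝ) * p) * ((m.choose i : ℝ) * p ^ i * (1 - p) ^ (m - i)) := by
      intro i hi
      have hc : (m + 1) * m.choose i = (m+1).choose (i+1) * (i+1) :=
        Nat.add_one_mul_choose_eq m i
      have hc' : ((m : ℝ)+1) * (m.choose i : ℝ) = ((m+1).choose (i+1) : ℝ) * ((i : ℝ)+1) := by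
        exact_mod_cast congrArg (fun x : ℕ => (x : ℝ)) hc
      have hsub : m + 1 - (i+1) = m - i := Nat.succ_sub_succ m i
      rw [hsub]
      push_cast
      linear_combination -p ^ (i + 1) * (1 - p) ^ (m - i) * hc'
    rw [Finset.sum_congr rfl key, ← Finset.mul_sum, binom_sum_one m p]
    push_cast
    ring

lemma pow_self_le_factorial_mul_exp (j : ℕ) :
    (j : ℝ) ^ j ≤ (j.factorial : ℝ) * Real.exp 1 ^ j := by
  have h := Real.sum_le_exp_of_nonneg (x := (j : ℝ)) (by positivity) (j + 1)
  have hterm : (j : ℝ) ^ j / j.factorial ≤ ∑ i ∈ Finset.range (j + 1), (j : ℝ) ^ i / i.factorial := by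
    exact Finset.single_le_sum (f := fun i => (j : ℝ) ^ i / (i.factorial : ℝ))
      (fun i _ => by positivity) (Finset.self_mem_range_succ j)
  have hfac : (0 : ℝ) < j.factorial := by exact_mod_cast j.factorial_pos
  rw [Real.exp_one_pow] at *
  have := hterm.trans h
  rw [div_le_iff₀ hfac] at this
  calc (j:ℝ)^j ≤ Real.exp j * j.factorial := this
    _ = (j.factorial : ℝ) * Real.exp j := by ring

lemma term_bound (n j : ℕ) (p : ℝ) (hp0 : 0 ≤ p) (K : ℝ) (hK : 0 < K)
    (hKnp : 2 * Real.exp 1 * n * p < K) (hj : K ≤ j) :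
    (n.choose j : ℝ) * p ^ j ≤ (1/2) ^ j := by
  have hj0 : 0 < (j : ℝ) := lt_of_lt_of_le hK hj
  have hfac : (0 : ℝ) < j.factorial := by exact_mod_cast j.factorial_pos
  have h1 : (n.choose j : ℝ) * p ^ j ≤ ((n : ℝ) * p) ^ j / j.factorial := by
    have hc : (n.choose j : ℝ) ≤ (n : ℝ) ^ j / j.factorial := by
      have := Nat.choose_le_pow_div (α := ℝ) j n
      push_cast at this ⊢
      exact this
    rw [mul_pow]
    calc (n.choose j : ℝ) * p ^ j ≤ ((n : ℝ) ^ j / j.factorial) * p ^ j := by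
          apply mul_le_mul_of_nonneg_right hc (by positivity)
      _ = (n : ℝ) ^ j * p ^ j / j.factorial := by ring
  have h2 : ((n : ℝ) * p) ^ j / j.factorial ≤ (Real.exp 1 * n * p / j) ^ j := by
    have hpj := pow_self_le_factorial_mul_exp j
    rw [div_pow, div_le_div_iff₀ hfac (by positivity)]
    have hnp : (0:ℝ) ≤ ((n:ℝ)*p)^j := by positivity
    calc ((n : ℝ) * p) ^ j * (j:ℝ)^j ≤ ((n : ℝ) * p) ^ j * ((j.factorial : ℝ) * Real.exp 1 ^ j) :=
          mul_le_mul_of_nonneg_left hpj hnp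
      _ = (Real.exp 1 * ↑n * p) ^ j * ↑j.factorial := by rw [mul_pow, mul_pow, mul_pow]; ring
  have h3 : (Real.exp 1 * n * p / j) ^ j ≤ (1/2 : ℝ) ^ j := by
    apply pow_le_pow_left₀ (by positivity)
    rw [div_le_iff₀ hj0]
    nlinarith [hKnp, hj]
  exact h1.trans (h2.trans h3)

lemma tail_summable (K : ℝ) (hK : 0 < K) :
    Summable (fun j : ℕ => max ((j:ℝ) - K) 0 * (1/2 : ℝ)^j) := by
  have hb : Summable (fun j : ℕ => (j:ℝ) * (1/2 : ℝ)^j) := by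
    have := summable_pow_mul_geometric_of_norm_lt_one (R := ℝ) 1 (r := 1/2) (by norm_num)
    simpa using this
  apply Summable.of_nonneg_of_le (fun j => by positivity) _ hb
  intro j
  apply mul_le_mul_of_nonneg_right _ (by positivity)
  apply max_le (by linarith [hK]) (Nat.cast_nonneg j)

lemma tail_bound (K : ℝ) (hK : 0 < K) (h2e : 2 * Real.exp 1 < (2:ℝ)^(K:ℝ)) :
    ∑' j : ℕ, max ((j:ℝ) - K) 0 * (1/2 : ℝ)^j ≤ K * (2:ℝ)^(-K) := by
  set g : ℕ → ℝ := fun j => max ((j:ℝ) - K) 0 * (1/2 : ℝ)^j with hg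
  have hsum : Summable g := tail_summable K hK
  set m : ℕ := ⌈K⌉₊ with hmdef
  have hm1 : K ≤ (m : ℝ) := Nat.le_ceil K
  have hm2 : (m : ℝ) < K + 1 := Nat.ceil_lt_add_one hK.le
  set d : ℝ := (m : ℝ) - K with hd
  have hd0 : 0 ≤ d := by simp [hd]; linarith
  have hd1 : d ≤ 1 := by simp [hd]; linarith
  -- first m terms vanish
  have hzero : ∀ i ∈ Finset.range m, g i = 0 := by
    intro i hi
    have : (i : ℝ) < K := by
      have : (i : ℝ) ≤ (m : ℝ) - 1 := by
        have := Finset.mem_range.mp hi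
        have : (i:ℝ) + 1 ≤ (m:ℝ) := by exact_mod_cast this
        linarith
      linarith
    simp [hg, max_eq_right, sub_nonpos.mpr this.le]
  have hsplit := Summable.sum_add_tsum_nat_add (f := g) m hsum
  rw [Finset.sum_eq_zero hzero, zero_add] at hsplit
  -- compute shifted tsum
  have hs1 : Summable (fun i : ℕ => (i:ℝ) * (1/2 : ℝ)^i) := by
    have := summable_pow_mul_geometric_of_norm_lt_one (R := ℝ) 1 (r := 1/2) (by norm_num)
    simpa using this
  have hs2 : Summable (fun i : ℕ => (1/2 : ℝ)^i) := summable_geometric_of_lt_one (by norm_num) (by norm_num)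
  have hshift : ∀ i : ℕ, g (i + m) = (1/2:ℝ)^m * ((i:ℝ) * (1/2:ℝ)^i + d * (1/2:ℝ)^i) := by
    intro i
    have h1 : ((i + m : ℕ) : ℝ) - K = (i : ℝ) + d := by push_cast; ring
    have h2 : (0:ℝ) ≤ (i : ℝ) + d := by positivity
    simp only [hg, h1, max_eq_left h2, pow_add]
    ring
  have htsum : ∑' i : ℕ, g (i + m) = (1/2:ℝ)^m * (2 + d * 2) := by
    rw [tsum_congr hshift, tsum_mul_left, Summable.tsum_add hs1 (hs2.mul_left d), tsum_mul_left,
      tsum_geometric_two]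
    have h12 : ∑' i : ℕ, (i:ℝ) * (1/2:ℝ)^i = 2 := by
      have := tsum_coe_mul_geometric_of_norm_lt_one (𝕜 := ℝ) (r := 1/2) (by norm_num)
      rw [this]; norm_num
    rw [h12]
  rw [← hsplit, htsum]
  -- remaining: (1/2)^m * (2 + d*2) ≤ K * 2^(-K)
  set L : ℝ := Real.log 2 with hL
  have hL0 : 0 < L := Real.log_pos one_lt_two
  have hL1 : L < 1 := by
    calc L < 0.6931471808 := Real.log_two_lt_d9
      _ < 1 := by norm_num
  have hKL : L + 1 < K * L := by
    have hlog := Real.log_lt_log (by positivity) h2e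
    rw [Real.log_rpow two_pos, Real.log_mul (by norm_num) (Real.exp_pos 1).ne',
      Real.log_exp] at hlog
    linarith
  have hEd : (1:ℝ) + d * L ≤ (2:ℝ)^(d:ℝ) := by
    rw [Real.rpow_def_of_pos two_pos]
    have := Real.add_one_le_exp (d * L)
    calc (1:ℝ) + d * L = d * L + 1 := by ring
      _ ≤ Real.exp (d * L) := this
      _ = Real.exp (L * d) := by rw [mul_comm]
  have hkey : 2 + d * 2 ≤ K * (2:ℝ)^(d:ℝ) := by
    have h1 : K * (1 + d * L) ≤ K * (2:ℝ)^(d:ℝ) := mul_le_mul_of_nonneg_left hEd hK.le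
    nlinarith [sq_nonneg (1 - L), mul_nonneg hd0 (le_of_lt (sub_pos.mpr hKL)),
      mul_nonneg (sub_nonneg.mpr hd1) (sub_nonneg.mpr hL1.le)]
  have hpow : (2:ℝ)^(-K) = (2:ℝ)^(d:ℝ) * (1/2:ℝ)^m := by
    have h1 : (2:ℝ)^(-K) = (2:ℝ)^(d + -(m:ℝ)) := by rw [hd]; ring_nf
    rw [h1, Real.rpow_add two_pos, Real.rpow_neg two_pos.le, Real.rpow_natCast]
    rw [one_div, inv_pow]
  rw [hpow]
  have hpm : (0:ℝ) < (1/2:ℝ)^m := by positivity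
  calc (1/2:ℝ)^m * (2 + d * 2) ≤ (1/2:ℝ)^m * (K * (2:ℝ)^(d:ℝ)) :=
        mul_le_mul_of_nonneg_left hkey hpm.le
    _ = K * ((2:ℝ)^(d:ℝ) * (1/2:ℝ)^m) := by ring

/-- Let `X ∼ Bin(n,p)` and `K > 0` with `2·e·n·p < K`.  If `Y = min{X, K}`,
then `E(Y) ≥ np − K·2^(−K)`.  The expectation of `Y` is written out explicitly as a sum
against the binomial distribution. -/
theorem stmt6 (n : ℕ) (p : ℝ) (hp0 : 0 ≤ p) (hp1 : p ≤ 1) (K : ℝ) (hK : 0 < K)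
    (hKnp : 2 * Real.exp 1 * n * p < K) :
    n * p - K * (2 : ℝ) ^ (-K)
      ≤ ∑ j ∈ Finset.range (n + 1),
          (n.choose j : ℝ) * p ^ j * (1 - p) ^ (n - j) * min (j : ℝ) K := by
  have hq0 : (0:ℝ) ≤ 1 - p := by linarith
  have htnn : ∀ j : ℕ, 0 ≤ (n.choose j : ℝ) * p ^ j * (1 - p) ^ (n - j) := by
    intro j; positivity
  by_cases hcase : (2:ℝ) ^ (K:ℝ) ≤ 2 * Real.exp 1
  · -- trivial case : LHS ≤ 0 ≤ sum
    have hsumnn : 0 ≤ ∑ j ∈ Finset.range (n + 1),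
        (n.choose j : ℝ) * p ^ j * (1 - p) ^ (n - j) * min (j : ℝ) K := by
      apply Finset.sum_nonneg
      intro j _
      exact mul_nonneg (htnn j) (le_min (Nat.cast_nonneg j) hK.le)
    have hE : (0:ℝ) < (2:ℝ) ^ (K:ℝ) := Real.rpow_pos_of_pos two_pos K
    have hnp0 : (0:ℝ) ≤ (n:ℝ) * p := by positivity
    have h1 : (n:ℝ) * p * (2:ℝ) ^ (K:ℝ) ≤ (n:ℝ) * p * (2 * Real.exp 1) :=
      mul_le_mul_of_nonneg_left hcase hnp0
    have h2 : (n:ℝ) * p * (2 * Real.exp 1) < K ∨ (n:ℝ) * p = 0 := by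
      rcases eq_or_lt_of_le hnp0 with h | h
      · right; exact h.symm
      · left; nlinarith [hKnp]
    have h3 : (n:ℝ) * p ≤ K * (2:ℝ) ^ (-K) := by
      rw [Real.rpow_neg two_pos.le, mul_comm K, ← div_eq_inv_mul, le_div_iff₀ hE]
      rcases h2 with h | h
      · linarith
      · rw [h, zero_mul]; linarith [hE, hK]
    linarith
  · -- main case
    push_neg at hcase
    have hmin : ∀ j : ℕ, (n.choose j : ℝ) * p ^ j * (1 - p) ^ (n - j) * min (j : ℝ) K
        = (n.choose j : ℝ) * p ^ j * (1 - p) ^ (n - j) * j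
          - (n.choose j : ℝ) * p ^ j * (1 - p) ^ (n - j) * max ((j:ℝ) - K) 0 := by
      intro j
      rcases le_total (j : ℝ) K with h | h
      · rw [min_eq_left h, max_eq_right (by linarith)]; ring
      · rw [min_eq_right h, max_eq_left (by linarith)]; ring
    rw [Finset.sum_congr rfl (fun j _ => hmin j), Finset.sum_sub_distrib, binom_mean n p]
    have htail : ∑ j ∈ Finset.range (n + 1),
        (n.choose j : ℝ) * p ^ j * (1 - p) ^ (n - j) * max ((j:ℝ) - K) 0
          ≤ K * (2:ℝ) ^ (-K) := by
      have hle : ∀ j ∈ Finset.range (n + 1),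
          (n.choose j : ℝ) * p ^ j * (1 - p) ^ (n - j) * max ((j:ℝ) - K) 0
            ≤ max ((j:ℝ) - K) 0 * (1/2 : ℝ)^j := by
        intro j _
        rcases le_total K (j:ℝ) with h | h
        · have h1 : (n.choose j : ℝ) * p ^ j * (1 - p) ^ (n - j) ≤ (1/2 : ℝ)^j := by
            calc (n.choose j : ℝ) * p ^ j * (1 - p) ^ (n - j)
                ≤ (n.choose j : ℝ) * p ^ j * 1 := by
                  apply mul_le_mul_of_nonneg_left (pow_le_one₀ hq0 (by linarith)) (by positivity)
              _ = (n.choose j : ℝ) * p ^ j := by ring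
              _ ≤ (1/2 : ℝ)^j := term_bound n j p hp0 K hK hKnp h
          calc (n.choose j : ℝ) * p ^ j * (1 - p) ^ (n - j) * max ((j:ℝ) - K) 0
              ≤ (1/2 : ℝ)^j * max ((j:ℝ) - K) 0 :=
                mul_le_mul_of_nonneg_right h1 (le_max_right _ _)
            _ = max ((j:ℝ) - K) 0 * (1/2 : ℝ)^j := by ring
        · rw [max_eq_right (by linarith)]
          simp
      calc ∑ j ∈ Finset.range (n + 1),
            (n.choose j : ℝ) * p ^ j * (1 - p) ^ (n - j) * max ((j:ℝ) - K) 0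
          ≤ ∑ j ∈ Finset.range (n + 1), max ((j:ℝ) - K) 0 * (1/2 : ℝ)^j :=
            Finset.sum_le_sum hle
        _ ≤ ∑' j : ℕ, max ((j:ℝ) - K) 0 * (1/2 : ℝ)^j :=
            Summable.sum_le_tsum _ (fun j _ => by positivity) (tail_summable K hK)
        _ ≤ K * (2:ℝ) ^ (-K) := tail_bound K hK hcase
    linarith
end

section
/- If H is an induced topological minor of G, then H is a vertex-minor of G. -/
universe u

/-- Local complementation of a simple graph `G` at a vertex `x`. -/
def localComp {V : Type u} (G : SimpleGraph V) (x : V) : SimpleGraph V where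
  Adj a b := a ≠ b ∧
    (((G.Adj x a ∧ G.Adj x b) ∧ ¬ G.Adj a b) ∨ (¬ (G.Adj x a ∧ G.Adj x b) ∧ G.Adj a b))
  symm := by
    constructor
    intro a b h
    obtain ⟨hab, h⟩ := h
    refine ⟨hab.symm, ?_⟩
    rcases h with ⟨⟨h1, h2⟩, h3⟩ | ⟨h1, h2⟩
    · exact Or.inl ⟨⟨h2, h1⟩, fun h => h3 h.symm⟩
    · exact Or.inr ⟨fun h => h1 ⟨h.2, h.1⟩, h2.symm⟩
  loopless := ⟨fun a h => h.1 rfl⟩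

/-- Two graphs on the same vertex set are locally equivalent if one can be obtained from the
other by a sequence of local complementations. -/
def LocallyEquivalent {V : Type u} (G H : SimpleGraph V) : Prop :=
  Relation.ReflTransGen (fun G' H' => ∃ v, H' = localComp G' v) G H

/-- `H` is (isomorphic to) an induced subgraph of `G`. -/
def IsInducedSubgraph {W V : Type u} (H : SimpleGraph W) (G : SimpleGraph V) : Prop :=
  ∃ f : W ↪ V, ∀ a b : W, H.Adj a b ↔ G.Adj (f a) (f b)

/-- `H` is a vertex-minor of `G`: an induced subgraph of a graph locally equivalent to `G`. -/
def IsVertexMinor {W V : Type u} (H : SimpleGraph W) (G : SimpleGraph V) : Prop :=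
  ∃ G' : SimpleGraph V, LocallyEquivalent G G' ∧ IsInducedSubgraph H G'

/-- `K` is obtained from `H` by subdividing the single edge `uv` with a new vertex `x`. -/
def SubdivideStep {W U : Type u} (H : SimpleGraph W) (K : SimpleGraph U) : Prop :=
  ∃ (f : W ↪ U) (x : U) (u v : W),
    H.Adj u v ∧ (∀ w, f w ≠ x) ∧ (∀ y : U, y = x ∨ ∃ w, f w = y) ∧
    (∀ a b : W, K.Adj (f a) (f b) ↔ (H.Adj a b ∧ s(a, b) ≠ s(u, v))) ∧
    (∀ a : W, K.Adj x (f a) ↔ (a = u ∨ a = v))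

/-- `G` is a subdivision of `H`: obtained from `H` by repeatedly subdividing edges. -/
inductive IsSubdivisionOf : {U : Type u} → {W : Type u} → SimpleGraph U → SimpleGraph W → Prop
  | refl {W : Type u} (H : SimpleGraph W) : IsSubdivisionOf H H
  | step {U W X : Type u} {K : SimpleGraph U} {H : SimpleGraph W} {G' : SimpleGraph X} :
      IsSubdivisionOf K H → SubdivideStep K G' → IsSubdivisionOf G' H

/-- `H` is an induced topological minor of `G`: some induced subgraph of `G` is a
subdivision of `H`. -/
def IsInducedTopMinor {W V : Type u} (H : SimpleGraph W) (G : SimpleGraph V) : Prop :=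
  ∃ (U : Type u) (K : SimpleGraph U), IsSubdivisionOf K H ∧ IsInducedSubgraph K G

lemma subdiv_to_vertexMinor {U W : Type u} {K : SimpleGraph U} {H : SimpleGraph W}
    (hsub : IsSubdivisionOf K H) :
    ∀ {V : Type u} (G : SimpleGraph V), IsInducedSubgraph K G → IsVertexMinor H G := by
  induction hsub with
  | refl H =>
    intro V G hind
    exact ⟨G, Relation.ReflTransGen.refl, hind⟩
  | @step U W X K H G' _ hstep ih =>
    intro V G hind
    obtain ⟨g, hg⟩ := hind
    obtain ⟨f, x, u, v, huv, hfx, _, hK, hx⟩ := hstep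
    -- `K` is an induced subgraph of `localComp G (g x)` via `f.trans g`
    have hKind : IsInducedSubgraph K (localComp G (g x)) := by
      refine ⟨f.trans g, fun a b => ?_⟩
      simp only [Function.Embedding.trans_apply, localComp]
      rw [← hg, ← hg, ← hg]
      constructor
      · intro hab
        have hne : g (f a) ≠ g (f b) := by
          intro h
          exact hab.ne (f.injective (g.injective h))
        refine ⟨hne, ?_⟩
        by_cases hs : s(a, b) = s(u, v)
        · refine Or.inl ⟨⟨(hx a).2 ?_, (hx b).2 ?_⟩, ?_⟩
          · rcases Sym2.eq_iff.mp hs with ⟨h1, _⟩ | ⟨h1, _⟩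
            · exact Or.inl h1
            · exact Or.inr h1
          · rcases Sym2.eq_iff.mp hs with ⟨_, h2⟩ | ⟨_, h2⟩
            · exact Or.inr h2
            · exact Or.inl h2
          · intro hGab
            exact ((hK a b).mp hGab).2 hs
        · refine Or.inr ⟨?_, (hK a b).mpr ⟨hab, hs⟩⟩
          rintro ⟨h1, h2⟩
          rcases (hx a).mp h1 with rfl | rfl <;> rcases (hx b).mp h2 with rfl | rfl
          · exact hab.ne rfl
          · exact hs rfl
          · exact hs (Sym2.eq_swap)
          · exact hab.ne rfl
      · rintro ⟨hne, ⟨⟨h1, h2⟩, _⟩ | ⟨_, h2⟩⟩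
        · rcases (hx a).mp h1 with rfl | rfl <;> rcases (hx b).mp h2 with rfl | rfl
          · exact absurd rfl (fun h => hne (congrArg g (congrArg f h)))
          · exact huv
          · exact huv.symm
          · exact absurd rfl (fun h => hne (congrArg g (congrArg f h)))
        · exact ((hK a b).mp h2).1
    obtain ⟨G₂, heq, hind₂⟩ := ih (localComp G (g x)) hKind
    exact ⟨G₂, Relation.ReflTransGen.head ⟨g x, rfl⟩ heq, hind₂⟩

/-- If `H` is an induced topological minor of `G`, then `H` is a
vertex-minor of `G`. -/
theorem stmt8 {V W : Type u} (G : SimpleGraph V) (H : SimpleGraph W)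
    (h : IsInducedTopMinor H G) : IsVertexMinor H G := by
  obtain ⟨U, K, hsub, hind⟩ := h
  exact subdiv_to_vertexMinor hsub G hind
end

section
/- Let H be a 3-regular graph on m vertices which is an α-edge-expander. Then for every partition (S, Sᶜ) of V(H) with m/3 ≤ |S| ≤ 2m/3, the cut-rank ρ_H(S, Sᶜ), i.e., the F₂-rank of the bipartite adjacency matrix between S and Sᶜ, is at least α·m/9. -/
open scoped Classical

/-- The set of edges of `H` with exactly one endpoint in `S`. -/
def cutEdges {V : Type*} (H : SimpleGraph V) (S : Finset V) : Set (Sym2 V) :=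
  {e ∈ H.edgeSet | ∃ a ∈ S, ∃ b ∉ S, e = s(a, b)}

/-- The bipartite adjacency matrix over `F₂` between `S` and its complement. -/
noncomputable def cutMatrix {V : Type*} [Fintype V] (H : SimpleGraph V) (S : Finset V) :
    Matrix {x // x ∈ S} {x // x ∈ Sᶜ} (ZMod 2) :=
  fun u v => if H.Adj u.1 v.1 then 1 else 0

/-- Every element of the span of `s` has support inside `U` if all elements of `s` do. -/
lemma support_subset_of_span {ι K : Type*} [Field K] (s : Set (ι → K)) (U : Finset ι)
    (hs : ∀ w ∈ s, ∀ v, w v ≠ 0 → v ∈ U) :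
    ∀ w ∈ Submodule.span K s, ∀ v, w v ≠ 0 → v ∈ U := by
  intro w hw
  induction hw using Submodule.span_induction with
  | mem x hx => exact hs x hx
  | zero => intro v hv; simp at hv
  | add x y _ _ hx hy =>
    intro v hv
    by_contra h
    have hx0 : x v = 0 := by by_contra h'; exact h (hx v h')
    have hy0 : y v = 0 := by by_contra h'; exact h (hy v h')
    exact hv (by simp [Pi.add_apply, hx0, hy0])
  | smul a x _ hx =>
    intro v hv
    apply hx v
    intro h0
    exact hv (by simp [Pi.smul_apply, h0])

/-- Let `H` be a 3-regular `α`-edge-expander on `m` vertices.  Then every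
partition `(S, Sᶜ)` with `m/3 ≤ |S| ≤ 2m/3` has cut-rank (the `F₂`-rank of the bipartite
adjacency matrix between `S` and `Sᶜ`) at least `α·m/9`. -/
theorem stmt10 {V : Type*} [Fintype V] (H : SimpleGraph V) [DecidableRel H.Adj]
    (m : ℕ) (hm : Fintype.card V = m)
    (hreg : ∀ v : V, H.degree v = 3) (α : ℝ)
    (hexp : ∀ S : Finset V,
      α * min (3 * S.card) (3 * Sᶜ.card) ≤ ((cutEdges H S).ncard : ℝ)) :
    ∀ S : Finset V, m ≤ 3 * S.card → 3 * S.card ≤ 2 * m →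
      α * m / 9 ≤ ((cutMatrix H S).rank : ℝ) := by
  intro S hS1 hS2
  rcases le_or_gt α 0 with hα | hα
  · have h1 : α * m / 9 ≤ 0 := by
      apply div_nonpos_of_nonpos_of_nonneg _ (by norm_num)
      exact mul_nonpos_of_nonpos_of_nonneg hα (Nat.cast_nonneg _)
    exact h1.trans (Nat.cast_nonneg _)
  set A := cutMatrix H S with hAdef
  have hAne : ∀ (i : {x // x ∈ S}) (v : {x // x ∈ Sᶜ}), A i v ≠ 0 ↔ H.Adj i.1 v.1 := by
    intro i v
    simp only [hAdef, cutMatrix]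
    constructor
    · intro h; by_contra hadj; simp [hadj] at h
    · intro h; simp [h]
  -- row supports have size ≤ 3
  have hrow : ∀ i : {x // x ∈ S},
      (Finset.univ.filter (fun v : {x // x ∈ Sᶜ} => A i v ≠ 0)).card ≤ 3 := by
    intro i
    have := Finset.card_le_card_of_injOn (f := fun v : {x // x ∈ Sᶜ} => v.1)
      (s := Finset.univ.filter (fun v : {x // x ∈ Sᶜ} => A i v ≠ 0))
      (t := H.neighborFinset i.1)
      (by intro v hv
          simp only [Finset.mem_coe, Finset.mem_filter] at hv ⊢
          rw [SimpleGraph.mem_neighborFinset]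
          exact (hAne i v).1 hv.2)
      (fun a _ b _ h => Subtype.ext h)
    rwa [SimpleGraph.card_neighborFinset_eq_degree, hreg] at this
  -- column supports have size ≤ 3
  have hcol : ∀ v : {x // x ∈ Sᶜ},
      (Finset.univ.filter (fun i : {x // x ∈ S} => A i v ≠ 0)).card ≤ 3 := by
    intro v
    have := Finset.card_le_card_of_injOn (f := fun i : {x // x ∈ S} => i.1)
      (s := Finset.univ.filter (fun i : {x // x ∈ S} => A i v ≠ 0))
      (t := H.neighborFinset v.1)
      (by intro i hi
          simp only [Finset.mem_coe, Finset.mem_filter] at hi ⊢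
          rw [SimpleGraph.mem_neighborFinset]
          exact ((hAne i v).1 hi.2).symm)
      (fun a _ b _ h => Subtype.ext h)
    rwa [SimpleGraph.card_neighborFinset_eq_degree, hreg] at this
  -- a linearly independent spanning subset of the rows
  obtain ⟨b, hbsub, hbspan, hbli⟩ := exists_linearIndependent (ZMod 2) (Set.range A)
  have hbfin : b.Finite := (Set.finite_range A).subset hbsub
  haveI : Fintype b := hbfin.fintype
  have hbcard : b.toFinset.card = A.rank := by
    rw [A.rank_eq_finrank_span_row]
    change _ = Module.finrank (ZMod 2) (Submodule.span (ZMod 2) (Set.range A))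
    rw [← hbspan, finrank_span_set_eq_card hbli]
  set U : Finset {x // x ∈ Sᶜ} :=
    b.toFinset.biUnion (fun w => Finset.univ.filter (fun v => w v ≠ 0)) with hUdef
  have hUcard : U.card ≤ 3 * A.rank := by
    calc U.card ≤ ∑ w ∈ b.toFinset, (Finset.univ.filter (fun v => w v ≠ 0)).card :=
          Finset.card_biUnion_le
      _ ≤ ∑ _w ∈ b.toFinset, 3 := by
          apply Finset.sum_le_sum
          intro w hw
          obtain ⟨i, rfl⟩ := hbsub (Set.mem_toFinset.1 hw)
          exact hrow i
      _ = 3 * b.toFinset.card := by rw [Finset.sum_const, smul_eq_mul, mul_comm]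
      _ = 3 * A.rank := by rw [hbcard]
  -- every row has support in U
  have hrowU : ∀ (i : {x // x ∈ S}) (v : {x // x ∈ Sᶜ}), A i v ≠ 0 → v ∈ U := by
    intro i
    apply support_subset_of_span b U
    · intro w hw v hv
      rw [hUdef, Finset.mem_biUnion]
      exact ⟨w, Set.mem_toFinset.2 hw, Finset.mem_filter.2 ⟨Finset.mem_univ _, hv⟩⟩
    · rw [hbspan]; exact Submodule.subset_span ⟨i, rfl⟩
  -- count nonzero entries
  set P : Finset ({x // x ∈ S} × {x // x ∈ Sᶜ}) :=
    Finset.univ.filter (fun p => A p.1 p.2 ≠ 0) with hPdef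
  have hPcard : P.card ≤ 9 * A.rank := by
    have hfib : P.card = ∑ v ∈ U, (P.filter (fun p => p.2 = v)).card := by
      apply Finset.card_eq_sum_card_fiberwise
      intro p hp
      rw [Finset.mem_coe, hPdef, Finset.mem_filter] at hp
      exact hrowU p.1 p.2 hp.2
    have hfib2 : ∀ v ∈ U, (P.filter (fun p => p.2 = v)).card ≤ 3 := by
      intro v _
      refine le_trans ?_ (hcol v)
      apply Finset.card_le_card_of_injOn (f := fun p => p.1)
      · intro p hp
        simp only [hPdef, Finset.mem_coe, Finset.mem_filter, Finset.mem_univ, true_and] at hp ⊢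
        rw [← hp.2]; exact hp.1
      · intro p hp q hq h
        simp only [Finset.mem_coe, Finset.mem_filter] at hp hq
        exact Prod.ext h (hp.2.trans hq.2.symm)
    calc P.card ≤ ∑ _v ∈ U, 3 := hfib ▸ Finset.sum_le_sum hfib2
      _ = 3 * U.card := by rw [Finset.sum_const, smul_eq_mul, mul_comm]
      _ ≤ 3 * (3 * A.rank) := by omega
      _ = 9 * A.rank := by ring
  -- cutEdges inject into P
  have hcut : (cutEdges H S).ncard ≤ P.card := by
    have hsub : cutEdges H S ⊆ ↑(P.image (fun p => s(p.1.1, p.2.1))) := by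
      rintro e ⟨he, a, ha, c, hc, rfl⟩
      have hadj : H.Adj a c := H.mem_edgeSet.1 he
      have hcc : c ∈ Sᶜ := Finset.mem_compl.2 hc
      refine Finset.mem_coe.2 (Finset.mem_image.2 ⟨(⟨a, ha⟩, ⟨c, hcc⟩), ?_, rfl⟩)
      rw [hPdef, Finset.mem_filter]
      exact ⟨Finset.mem_univ _, (hAne _ _).2 hadj⟩
    calc (cutEdges H S).ncard
        ≤ (↑(P.image (fun p : {x // x ∈ S} × {x // x ∈ Sᶜ} => s(p.1.1, p.2.1))) :
            Set (Sym2 V)).ncard := Set.ncard_le_ncard hsub (Finset.finite_toSet _)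
      _ = (P.image (fun p : {x // x ∈ S} × {x // x ∈ Sᶜ} => s(p.1.1, p.2.1))).card :=
            Set.ncard_coe_finset _
      _ ≤ P.card := Finset.card_image_le
  -- m ≤ min (3|S|) (3|Sᶜ|)
  have hScard : S.card ≤ m := hm ▸ S.card_le_univ
  have hSc : Sᶜ.card = m - S.card := by rw [Finset.card_compl, hm]
  have hmin : m ≤ min (3 * S.card) (3 * Sᶜ.card) := by
    apply le_min hS1
    omega
  have hchain : α * m ≤ 9 * (A.rank : ℝ) := by
    calc α * m ≤ α * ((min (3 * S.card) (3 * Sᶜ.card) : ℕ) : ℝ) :=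
          mul_le_mul_of_nonneg_left (by exact_mod_cast hmin) hα.le
      _ ≤ ((cutEdges H S).ncard : ℝ) := hexp S
      _ ≤ (P.card : ℝ) := by exact_mod_cast hcut
      _ ≤ 9 * (A.rank : ℝ) := by exact_mod_cast hPcard
  linarith
end

section
/- Let G be a graph, T a tree subgraph of G on m vertices, and suppose that every partition (W₁,W₂) of V(T) with |W₁|,|W₂| ≥ m/3 has at least cn edges of G between W₁ and W₂ (i.e., the bisection width of H = G[V(T)] is at least cn). Suppose further that X ⊆ V(G) is a set of vertices such that the number of edges of G incident to X is at most cn/2, and every vertex of V(G) \ X has degree at most M in G. Then the rank-width of G is at least cn/(2M²). -/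
open scoped Classical

/-- The cut-rank of a vertex set `A` in `G`: the `F₂`-rank of the bipartite adjacency
matrix between `A` and its complement. -/
noncomputable def cutRank {V : Type} [Fintype V] (G : SimpleGraph V) (A : Set V) : ℕ :=
  Matrix.rank (fun (u : A) (v : ↥(Aᶜ)) => if G.Adj u.1 v.1 then (1 : ZMod 2) else 0)

/-- `G` has a rank-decomposition of width at most `k`: a subcubic tree `t` (all degrees
`1` or `3`) whose leaves are in bijection with `V(G)` via `f`, such that every edge `xy`
of `t` induces a bipartition of `V(G)` of cut-rank at most `k`. -/
def HasRankwidthAtMost {V : Type} [Fintype V] (G : SimpleGraph V) (k : ℕ) : Prop :=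
  ∃ (B : Type) (_ : Fintype B) (t : SimpleGraph B) (_ : t.IsTree),
    (∀ b : B, t.degree b = 1 ∨ t.degree b = 3) ∧
    ∃ f : V ≃ {b : B // t.degree b = 1},
      ∀ x y : B, t.Adj x y →
        cutRank G {v : V | (t.deleteEdges {s(x, y)}).Reachable (↑(f v)) x} ≤ k

/-!
A rank-decomposition of width `k` has an edge splitting the leaves labelled by `W` into two parts
of at least `|W|/3` each: orient the edges of the decomposition tree towards a side holding at
least a third of `W` and take such a side of minimal size. (Here `|W| ≠ 1`, as `W` is the support
of a graph, and `|W| = 0` forces `cn ≤ 0`.) By the bisection hypothesis at least `cn` edges of `G`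
cross this cut; at most `cn/2` of them touch `X`, and the others are nonzero entries of a
submatrix of the cut matrix with at most `M` nonzero entries in each row and column. A basis of
its columns meets at most `rank · M` nonzero rows, so it has at most `rank · M²` nonzero entries,
and its rank is at most the cut-rank, that is, at most `k`. Hence `cn/2 ≤ k M²`.
-/

open Finset

theorem SimpleGraph.support_ne_singleton {V : Type*} (T : SimpleGraph V) (w : V) :
    T.support ≠ {w} := by
  intro h
  obtain ⟨u, hu⟩ := T.mem_support.mp (h ▸ rfl : w ∈ T.support)
  have hu' : u ∈ T.support := T.mem_support.mpr ⟨w, hu.symm⟩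
  rw [h] at hu'
  exact hu.ne hu'.symm

namespace Matrix

variable {F m n : Type*} [Field F] [DecidableEq F] [Fintype m] [Fintype n]

theorem card_nonzero_rows_le_rank_mul (A : Matrix m n F) {M : ℕ}
    (hcol : ∀ j, #{i | A i j ≠ 0} ≤ M) : #{i | A i ≠ 0} ≤ A.rank * M := by
  obtain ⟨b, hb, hspan, hli⟩ := exists_linearIndependent F (Set.range A.col)
  have : Fintype b := ((Set.finite_range _).subset hb).fintype
  have hcard : b.toFinset.card = A.rank := by
    rw [← finrank_span_set_eq_card hli, hspan, rank_eq_finrank_span_cols]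
  -- a row on which every basis column vanishes is a zero row
  have hcover : ({i | A i ≠ 0} : Finset m) ⊆ b.toFinset.biUnion (fun v => {i | v i ≠ 0}) := by
    intro i hi
    by_contra hnot
    simp only [mem_biUnion, Set.mem_toFinset, mem_filter, mem_univ, true_and, not_exists,
      not_and, not_not] at hnot
    have hker : Submodule.span F (Set.range A.col) ≤ LinearMap.ker (LinearMap.proj i) := by
      rw [← hspan, Submodule.span_le]
      exact hnot
    refine (mem_filter.mp hi).2 (funext fun j => ?_)
    exact hker (Submodule.subset_span ⟨j, rfl⟩)
  calc #{i | A i ≠ 0} ≤ ∑ v ∈ b.toFinset, #{i | v i ≠ 0} :=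
        (card_le_card hcover).trans card_biUnion_le
    _ ≤ ∑ _v ∈ b.toFinset, M := sum_le_sum fun v hv => by
        obtain ⟨j, rfl⟩ := hb (Set.mem_toFinset.mp hv)
        exact hcol j
    _ = A.rank * M := by rw [sum_const, hcard, smul_eq_mul]

theorem card_nonzero_entries_le_rank_mul_sq (A : Matrix m n F) {M : ℕ}
    (hrow : ∀ i, #{j | A i j ≠ 0} ≤ M) (hcol : ∀ j, #{i | A i j ≠ 0} ≤ M) :
    #{p : m × n | A p.1 p.2 ≠ 0} ≤ A.rank * M ^ 2 := by
  calc #{p : m × n | A p.1 p.2 ≠ 0} = ∑ i, #{j | A i j ≠ 0} := by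
        simp only [card_filter, Fintype.sum_prod_type]
    _ = ∑ i with A i ≠ 0, #{j | A i j ≠ 0} := by
        refine (sum_filter_of_ne fun i _ hi => ?_).symm
        intro h0
        simp [h0] at hi
    _ ≤ #{i | A i ≠ 0} * M := by
        simpa using sum_le_card_nsmul _ _ M fun i _ => hrow i
    _ ≤ A.rank * M * M := Nat.mul_le_mul_right M (A.card_nonzero_rows_le_rank_mul hcol)
    _ = A.rank * M ^ 2 := by ring

end Matrix

namespace SimpleGraph

section

variable {B : Type*} {t : SimpleGraph B}

def edgeSide (t : SimpleGraph B) (x y : B) : Set B :=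
  {b | (t.deleteEdges {s(x, y)}).Reachable b x}

theorem mem_edgeSide_or_mem_edgeSide (ht : t.Preconnected) (x y b : B) :
    b ∈ t.edgeSide x y ∨ b ∈ t.edgeSide y x := by
  simp only [edgeSide, Set.mem_ofPred_eq, Sym2.eq_swap (a := y)]
  obtain ⟨w⟩ := ht b x
  induction w with
  | nil => exact .inl .rfl
  | @cons a c x h p ih =>
    by_cases he : s(a, c) = s(x, y)
    · rcases Sym2.eq_iff.mp he with ⟨rfl, -⟩ | ⟨rfl, -⟩
      · exact .inl .rfl
      · exact .inr .rfl
    · have hac := (deleteEdges_adj.mpr ⟨h, Set.notMem_singleton_iff.mpr he⟩).reachable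
      exact (ih ..).imp hac.trans hac.trans

theorem notMem_edgeSide_of_mem_edgeSide (ht : t.IsAcyclic) {x y b : B} (hxy : t.Adj x y)
    (hb : b ∈ t.edgeSide x y) : b ∉ t.edgeSide y x := by
  intro hb'
  rw [edgeSide, Set.mem_ofPred_eq, Sym2.eq_swap] at hb'
  exact isAcyclic_iff_forall_adj_isBridge.mp ht hxy (hb.symm.trans hb')

theorem mem_edgeSide_swap_iff (ht : t.IsTree) {x y b : B} (hxy : t.Adj x y) :
    b ∈ t.edgeSide y x ↔ b ∉ t.edgeSide x y :=
  ⟨fun h h' => notMem_edgeSide_of_mem_edgeSide ht.isAcyclic hxy h' h,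
    (mem_edgeSide_or_mem_edgeSide ht.connected.preconnected x y b).resolve_left⟩

theorem Walk.reachable_deleteEdges_of_notMem_support {G H : SimpleGraph B} (hGH : G ≤ H)
    {u v x : B} (p : G.Walk u v) (hx : x ∉ p.support) (w : B) :
    (H.deleteEdges {s(x, w)}).Reachable u v :=
  reachable_deleteEdges_iff_exists_walk.mpr ⟨p.mapLe hGH, fun h => hx <| by
    simpa only [Walk.support_mapLe_eq_support] using (p.mapLe hGH).fst_mem_support_of_mem_edges h⟩

theorem exists_adj_mem_edgeSide_of_ne {x y a : B} (ha : a ∈ t.edgeSide x y) (hax : a ≠ x) :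
    ∃ z, t.Adj x z ∧ z ≠ y ∧ a ∈ t.edgeSide z x := by
  obtain ⟨p, hp⟩ := ha.symm.exists_isPath
  cases p with
  | nil => exact absurd rfl hax
  | @cons _ z _ h q =>
    obtain ⟨hxz, hne⟩ := deleteEdges_adj.mp h
    refine ⟨z, hxz, by rintro rfl; exact hne rfl, ?_⟩
    rw [edgeSide, Set.mem_ofPred_eq, Sym2.eq_swap]
    exact (q.reachable_deleteEdges_of_notMem_support (deleteEdges_le _)
      ((Walk.cons_isPath_iff h q).mp hp).2 z).symm

theorem edgeSide_subset_edgeSide (ht : t.IsAcyclic) {x y z : B}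
    (hxz : t.Adj x z) (hzy : z ≠ y) : t.edgeSide z x ⊆ t.edgeSide x y \ {x} := by
  intro a ha
  have hx : x ∉ t.edgeSide z x := notMem_edgeSide_of_mem_edgeSide ht hxz .rfl
  obtain ⟨p⟩ := id ha
  have hxp : x ∉ p.support := fun h => hx ⟨(p.dropUntil x h)⟩
  have hzx : (t.deleteEdges {s(x, y)}).Adj z x :=
    deleteEdges_adj.mpr ⟨hxz.symm, by simp [hzy, hxz.ne.symm]⟩
  exact ⟨(p.reachable_deleteEdges_of_notMem_support (deleteEdges_le _) hxp y).trans
    hzx.reachable, fun h => hx (h ▸ ha)⟩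

theorem card_filter_edgeSide_add_card_filter_edgeSide (ht : t.IsTree) {x y : B}
    (hxy : t.Adj x y) (S : Finset B) :
    #{b ∈ S | b ∈ t.edgeSide x y} + #{b ∈ S | b ∈ t.edgeSide y x} = #S := by
  simp only [mem_edgeSide_swap_iff ht hxy]
  exact card_filter_add_card_filter_not _

variable [Fintype B]

theorem edgeSide_subset_singleton_of_degree_eq_one {x y : B} (hxy : t.Adj x y)
    (hx : t.degree x = 1) : t.edgeSide x y ⊆ {x} := by
  intro a ha
  by_contra hax
  obtain ⟨z, hxz, hzy, -⟩ := exists_adj_mem_edgeSide_of_ne ha hax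
  exact hzy (card_le_one.mp hx.le z ((mem_neighborFinset ..).mpr hxz) y
    ((mem_neighborFinset ..).mpr hxy))

theorem card_filter_edgeSide_le_sum {x : B} (y : B) {S : Finset B} (hxS : x ∉ S) :
    #{b ∈ S | b ∈ t.edgeSide x y} ≤
      ∑ z ∈ (t.neighborFinset x).erase y, #{b ∈ S | b ∈ t.edgeSide z x} := by
  refine le_trans (card_le_card fun a ha => ?_) card_biUnion_le
  obtain ⟨haS, ha⟩ := mem_filter.mp ha
  obtain ⟨z, hxz, hzy, haz⟩ := exists_adj_mem_edgeSide_of_ne ha (ne_of_mem_of_not_mem haS hxS)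
  exact mem_biUnion.mpr ⟨z, mem_erase.mpr ⟨hzy, (mem_neighborFinset ..).mpr hxz⟩,
    mem_filter.mpr ⟨haS, haz⟩⟩

theorem exists_adj_heavy_of_heavy (hdeg : ∀ b, t.degree b ≤ 3) {S : Finset B}
    (hS : ∀ b ∈ S, t.degree b = 1) (hS2 : 2 ≤ #S) {x y : B} (hxy : t.Adj x y)
    (hheavy : 2 * #S < 3 * #{b ∈ S | b ∈ t.edgeSide x y}) :
    ∃ z ∈ (t.neighborFinset x).erase y, #S ≤ 3 * #{b ∈ S | b ∈ t.edgeSide z x} := by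
  by_cases hxS : x ∈ S
  · have : #{b ∈ S | b ∈ t.edgeSide x y} ≤ 1 := card_le_one.mpr fun a ha b hb =>
      ((edgeSide_subset_singleton_of_degree_eq_one hxy (hS x hxS) (mem_filter.mp ha).2).trans
        (edgeSide_subset_singleton_of_degree_eq_one hxy (hS x hxS) (mem_filter.mp hb).2).symm)
    omega
  by_contra! hlight
  have hcover := card_filter_edgeSide_le_sum (t := t) y hxS
  have hbound := sum_le_card_nsmul _ _ #S fun z hz => (hlight z hz).le
  rw [← mul_sum, smul_eq_mul] at hbound
  have hcard : #((t.neighborFinset x).erase y) ≤ 2 := by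
    rw [card_erase_of_mem ((mem_neighborFinset ..).mpr hxy), card_neighborFinset_eq_degree]
    have := hdeg x
    omega
  have := Nat.mul_le_mul_right #S hcard
  omega

theorem exists_adj_balanced (ht : t.IsTree) (hdeg : ∀ b, t.degree b ≤ 3) {S : Finset B}
    (hS : ∀ b ∈ S, t.degree b = 1) (hS2 : 2 ≤ #S) :
    ∃ x y, t.Adj x y ∧ #S ≤ 3 * #{b ∈ S | b ∈ t.edgeSide x y} ∧
      #S ≤ 3 * #{b ∈ S | b ∈ t.edgeSide y x} := by
  set Q : Finset (B × B) := {p | t.Adj p.1 p.2 ∧ #S ≤ 3 * #{b ∈ S | b ∈ t.edgeSide p.1 p.2}}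
  have hmemQ : ∀ x y, (x, y) ∈ Q ↔ t.Adj x y ∧ #S ≤ 3 * #{b ∈ S | b ∈ t.edgeSide x y} := by
    simp [Q]
  have hQ : Q.Nonempty := by
    obtain ⟨a, haS⟩ : S.Nonempty := card_pos.mp (by omega)
    obtain ⟨b, hab⟩ : (t.neighborFinset a).Nonempty := by
      rw [← card_pos, card_neighborFinset_eq_degree, hS a haS]
      exact one_pos
    rw [mem_neighborFinset] at hab
    have := card_filter_edgeSide_add_card_filter_edgeSide ht hab S
    by_cases hab' : #S ≤ 3 * #{b' ∈ S | b' ∈ t.edgeSide a b}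
    · exact ⟨(a, b), (hmemQ a b).mpr ⟨hab, hab'⟩⟩
    · exact ⟨(b, a), (hmemQ b a).mpr ⟨hab.symm, by omega⟩⟩
  -- an oriented edge whose heavy side is as small as possible is balanced
  obtain ⟨⟨x, y⟩, hQxy, hmin⟩ := Q.exists_min_image (fun p => (t.edgeSide p.1 p.2).ncard) hQ
  obtain ⟨hxy, hheavy⟩ := (hmemQ x y).mp hQxy
  refine ⟨x, y, hxy, hheavy, ?_⟩
  by_contra hlight
  have := card_filter_edgeSide_add_card_filter_edgeSide ht hxy S
  obtain ⟨z, hz, hzheavy⟩ := exists_adj_heavy_of_heavy hdeg hS hS2 hxy (by omega)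
  obtain ⟨hzy, hxz⟩ := mem_erase.mp hz
  rw [mem_neighborFinset] at hxz
  have hlt : (t.edgeSide z x).ncard < (t.edgeSide x y).ncard :=
    Set.ncard_lt_ncard ((edgeSide_subset_edgeSide ht.isAcyclic hxz hzy).trans_ssubset
      (Set.sdiff_singleton_ssubset.mpr .rfl))
  exact hlt.not_ge (hmin (z, x) ((hmemQ z x).mpr ⟨hxz.symm, hzheavy⟩))

end

section

variable {V : Type} [Fintype V] (G : SimpleGraph V) [DecidableRel G.Adj]

theorem card_adj_subtype_le_degree (P : V → Prop) [Fintype (Subtype P)] (u : V) :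
    #{w : Subtype P | G.Adj u w} ≤ G.degree u := by
  rw [← card_neighborFinset_eq_degree]
  exact card_le_card_of_injOn Subtype.val (fun w hw => by simpa using hw)
    Subtype.val_injective.injOn

-- `cutRank` decides adjacency classically
theorem cutRank_eq_rank (A : Set V) :
    cutRank G A =
      Matrix.rank (fun (u : A) (v : ↥(Aᶜ)) => if G.Adj u.1 v.1 then (1 : ZMod 2) else 0) := by
  unfold cutRank
  congr 1
  ext u v
  congr

theorem card_adj_pairs_le_cutRank_mul_sq (A : Set V) (X : Finset V) {M : ℕ}
    (hdeg : ∀ v ∉ X, G.degree v ≤ M) :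
    #{p : {v // v ∈ A ∧ v ∉ X} × {v // v ∉ A ∧ v ∉ X} | G.Adj p.1 p.2} ≤
      cutRank G A * M ^ 2 := by
  let N : Matrix {v // v ∈ A ∧ v ∉ X} {v // v ∉ A ∧ v ∉ X} (ZMod 2) :=
    fun u w => if G.Adj u w then 1 else 0
  have hN : ∀ u w, N u w ≠ 0 ↔ G.Adj u w := fun u w => by
    by_cases h : G.Adj u w <;> simp [N, h]
  have hrank : N.rank ≤ cutRank G A := by
    rw [cutRank_eq_rank]
    exact Matrix.rank_submatrix_le
      (fun (u : A) (v : ↥(Aᶜ)) => if G.Adj u.1 v.1 then (1 : ZMod 2) else 0)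
      (fun u : {v // v ∈ A ∧ v ∉ X} => (⟨u.1, u.2.1⟩ : A))
      (fun w : {v // v ∉ A ∧ v ∉ X} => (⟨w.1, w.2.1⟩ : ↥(Aᶜ)))
  calc _ = #{p : _ × _ | N p.1 p.2 ≠ 0} := by simp only [hN]
    _ ≤ N.rank * M ^ 2 := by
      refine N.card_nonzero_entries_le_rank_mul_sq (M := M) (fun u => ?_) (fun w => ?_) <;>
        simp only [hN]
      · exact (G.card_adj_subtype_le_degree _ u).trans (hdeg u u.2.2)
      · simp only [G.adj_comm _ (w : V)]
        exact (G.card_adj_subtype_le_degree _ w).trans (hdeg w w.2.2)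
    _ ≤ _ := Nat.mul_le_mul_right _ hrank

theorem ncard_edges_between_le (A : Set V) (X : Finset V) {M : ℕ}
    (hdeg : ∀ v ∉ X, G.degree v ≤ M) {W₁ W₂ : Finset V} (h₁ : ∀ a ∈ W₁, a ∈ A)
    (h₂ : ∀ b ∈ W₂, b ∉ A) :
    {e ∈ G.edgeSet | ∃ a ∈ W₁, ∃ b ∈ W₂, e = s(a, b)}.ncard ≤
      cutRank G A * M ^ 2 + {e ∈ G.edgeSet | ∃ x ∈ X, x ∈ e}.ncard := by
  refine (Set.ncard_le_ncard_sdiff_add_ncard _ _ (Set.toFinite _)).trans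
    (Nat.add_le_add_right ?_ _)
  let P : Finset ({v // v ∈ A ∧ v ∉ X} × {v // v ∉ A ∧ v ∉ X}) := {p | G.Adj p.1 p.2}
  calc _ ≤ (↑(P.image fun p => s(p.1.1, p.2.1)) : Set (Sym2 V)).ncard := by
        refine Set.ncard_le_ncard ?_ (Set.toFinite _)
        rintro e ⟨⟨he, a, ha, b, hb, rfl⟩, heX⟩
        have haX : a ∉ X := fun h => heX ⟨he, a, h, Sym2.mem_mk_left a b⟩
        have hbX : b ∉ X := fun h => heX ⟨he, b, h, Sym2.mem_mk_right a b⟩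
        exact mem_coe.mpr (mem_image.mpr
          ⟨(⟨a, h₁ a ha, haX⟩, ⟨b, h₂ b hb, hbX⟩), by simpa [P] using he, rfl⟩)
    _ ≤ #P := by rw [Set.ncard_coe_finset]; exact card_image_le
    _ ≤ _ := G.card_adj_pairs_le_cutRank_mul_sq A X hdeg

end

end SimpleGraph

open SimpleGraph

theorem HasRankwidthAtMost.exists_balanced_partition {V : Type} [Fintype V]
    {G : SimpleGraph V} {k : ℕ} (hk : HasRankwidthAtMost G k) {W : Finset V} (hW : 2 ≤ #W) :
    ∃ A : Set V, cutRank G A ≤ k ∧ ∃ W₁ W₂ : Finset V, W₁ ∪ W₂ = W ∧ Disjoint W₁ W₂ ∧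
      #W ≤ 3 * #W₁ ∧ #W ≤ 3 * #W₂ ∧ (∀ a ∈ W₁, a ∈ A) ∧ ∀ b ∈ W₂, b ∉ A := by
  obtain ⟨B, _, t, ht, hdeg13, f, hcut⟩ := hk
  let leaf : V ↪ B := f.toEmbedding.trans (Function.Embedding.subtype _)
  obtain ⟨x, y, hxy, h₁, h₂⟩ := exists_adj_balanced ht
    (fun b => by rcases hdeg13 b with h | h <;> omega) (S := W.map leaf)
    (by simp only [mem_map]; rintro _ ⟨v, -, rfl⟩; exact (f v).2) (by simpa using hW)
  simp only [filter_map, card_map] at h₁ h₂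
  refine ⟨{v | leaf v ∈ t.edgeSide x y}, hcut x y hxy, {v ∈ W | leaf v ∈ t.edgeSide x y},
    {v ∈ W | leaf v ∈ t.edgeSide y x}, ?_, ?_, h₁, h₂, fun v hv => (mem_filter.mp hv).2,
    fun v hv => (mem_edgeSide_swap_iff ht hxy).mp (mem_filter.mp hv).2⟩
  · rw [← filter_or, filter_true_of_mem fun v _ =>
      mem_edgeSide_or_mem_edgeSide ht.connected.preconnected x y (leaf v)]
  · exact disjoint_filter.mpr fun v _ => notMem_edgeSide_of_mem_edgeSide ht.isAcyclic hxy

/-- Let `G` be a graph on `n` vertices, `T ⊆ G` a tree with vertex set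
`W`, `|W| = m`, such that every partition `(W₁, W₂)` of `W` with `|W₁|, |W₂| ≥ m/3` has at
least `c·n` crossing edges in `G`.  If `X` is a set of vertices touching at most `c·n/2`
edges of `G` and every vertex outside `X` has degree at most `M`, then the rank-width of
`G` is at least `c·n/(2M²)`. -/
theorem stmt13 {V : Type} [Fintype V] (G : SimpleGraph V) [DecidableRel G.Adj]
    (W : Finset V) (m : ℕ) (hWm : W.card = m)
    (htree : ∃ T : SimpleGraph V, T ≤ G ∧ T.support = ↑W ∧
      (T.induce (↑W : Set V)).IsTree)
    (c : ℝ)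
    (hbis : ∀ W₁ W₂ : Finset V, W₁ ∪ W₂ = W → Disjoint W₁ W₂ →
      m ≤ 3 * W₁.card → m ≤ 3 * W₂.card →
      c * Fintype.card V ≤
        ({e ∈ G.edgeSet | ∃ a ∈ W₁, ∃ b ∈ W₂, e = s(a, b)}.ncard : ℝ))
    (X : Finset V)
    (hX : ({e ∈ G.edgeSet | ∃ x ∈ X, x ∈ e}.ncard : ℝ) ≤ c * Fintype.card V / 2)
    (M : ℕ) (hdeg : ∀ v : V, v ∉ X → G.degree v ≤ M)
    (k : ℕ) (hk : HasRankwidthAtMost G k) :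
    c * Fintype.card V / (2 * M ^ 2) ≤ (k : ℝ) := by
  subst hWm
  have hW1 : #W ≠ 1 := by
    obtain ⟨T, -, hT, -⟩ := htree
    rintro hW
    obtain ⟨w, rfl⟩ := card_eq_one.mp hW
    exact T.support_ne_singleton w (by simpa using hT)
  rcases Nat.lt_or_ge #W 2 with hW | hW
  · have hcn : c * Fintype.card V ≤ 0 := by
      simpa using hbis ∅ ∅ (by simp [card_eq_zero.mp (by omega : #W = 0)])
        (disjoint_empty_left _) (by omega) (by omega)
    exact (div_nonpos_of_nonpos_of_nonneg hcn (by positivity)).trans k.cast_nonneg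
  obtain ⟨A, hA, W₁, W₂, hunion, hdisj, h₁, h₂, hW₁, hW₂⟩ := hk.exists_balanced_partition hW
  have hbal := hbis W₁ W₂ hunion hdisj h₁ h₂
  have hcross : ({e ∈ G.edgeSet | ∃ a ∈ W₁, ∃ b ∈ W₂, e = s(a, b)}.ncard : ℝ) ≤
      cutRank G A * M ^ 2 + {e ∈ G.edgeSet | ∃ x ∈ X, x ∈ e}.ncard := by
    exact_mod_cast ncard_edges_between_le G A X hdeg hW₁ hW₂
  have hkM : (cutRank G A : ℝ) * M ^ 2 ≤ k * M ^ 2 :=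
    mul_le_mul_of_nonneg_right (by exact_mod_cast hA) (sq_nonneg _)
  exact div_le_of_le_mul₀ (by positivity) k.cast_nonneg (by linarith)
end

section
/- In the configuration model construction, contracting a matching edge m = {e,f} with e in a cell V_i of degree two has the following property: if M is a configuration on the cell collection 𝒱 containing m, and 𝒱' is obtained by merging V_i and V_j (the cell containing f) into (V_i ∪ V_j) \ {e,f}, then the multigraph G(𝒱, M) is obtained from G(𝒱', M \ {m}) by subdividing an edge (or adding an isolated loop when m is contained in V_i). -/
open scoped Classical

/-- The edge multiset (with every edge counted twice, once for each of its two half-edges)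
of the multigraph `G(𝒲, M)` of the configuration model: the cells are the fibres of the
cell-assignment `c : Ω → κ` on the set `Ω` of half-edges, and the configuration is the
perfect matching given by the fixed-point-free involution `μ`. -/
def doubledEdges {Ω κ : Type*} [Fintype Ω] (c : Ω → κ) (μ : Ω → Ω) : Multiset (Sym2 κ) :=
  (Finset.univ : Finset Ω).val.map (fun a => s(c a, c (μ a)))

/-- Contracting a matching edge `m = {e, f}` (`f = μ e`) whose half-edge
`e` lies in a cell `V_i` of degree two: the cells `V_i` and `V_j` (with `f ∈ V_j`) are
merged into `(V_i ∪ V_j) \ {e, f}` (labelled `j`), and the matching is restricted.  Then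
the multigraph `G(𝒱, M)` is obtained from `G(𝒱', M \ {m})` by subdividing an edge with
the new vertex `i` (or, when `m ⊆ V_i`, by adding an isolated loop at `i`). -/
theorem stmt14 {Ω κ : Type*} [Fintype Ω] [DecidableEq Ω] [DecidableEq κ]
    (c : Ω → κ) (μ : Ω → Ω)
    (hinv : Function.Involutive μ) (hfix : ∀ a : Ω, μ a ≠ a)
    (e : Ω)
    (hdeg2 : (Finset.univ.filter (fun a : Ω => c a = c e)).card = 2)
    (μ' : {a : Ω // a ≠ e ∧ a ≠ μ e} → {a : Ω // a ≠ e ∧ a ≠ μ e})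
    (hμ' : ∀ a, (μ' a : Ω) = μ (a : Ω))
    (c' : {a : Ω // a ≠ e ∧ a ≠ μ e} → κ)
    (hc' : ∀ a, c' a = if c (a : Ω) = c e then c (μ e) else c (a : Ω)) :
    -- the contracted multigraph no longer contains the vertex `i = c e` ...
    (∀ a, c' a ≠ c e) ∧
    -- ... and if `m ⊆ V_i` then `G(𝒱, M)` is `G(𝒱', M \ {m})` plus an isolated loop at `i`,
    (c (μ e) = c e →
      doubledEdges c μ = doubledEdges c' μ' + Multiset.replicate 2 s(c e, c e)) ∧
    -- while otherwise `G(𝒱, M)` is obtained from `G(𝒱', M \ {m})` by subdividing the edge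
    -- of the merged cell coming from the second half-edge `e'` of `V_i`, with new vertex `i`.
    (c (μ e) ≠ c e →
      ∃ e' : Ω, e' ≠ e ∧ c e' = c e ∧
        doubledEdges c μ + Multiset.replicate 2 s(c (μ e), c (μ e')) =
          doubledEdges c' μ' + Multiset.replicate 2 s(c e, c (μ e))
            + Multiset.replicate 2 s(c e, c (μ e'))) := by
  
  classical
  -- identify the second half-edge `e'` of the cell of `e`
  have heF : e ∈ Finset.univ.filter (fun a : Ω => c a = c e) := by simp
  have hcard : ((Finset.univ.filter (fun a : Ω => c a = c e)).erase e).card = 1 := by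
    rw [Finset.card_erase_of_mem heF, hdeg2]
  obtain ⟨e', he'⟩ := Finset.card_eq_one.mp hcard
  have he'mem : e' ∈ (Finset.univ.filter (fun a : Ω => c a = c e)).erase e := by
    rw [he']; exact Finset.mem_singleton_self e'
  have he'ne : e' ≠ e := (Finset.mem_erase.mp he'mem).1
  have hce' : c e' = c e := by
    have := (Finset.mem_erase.mp he'mem).2
    simpa using this
  have hfiber : ∀ a : Ω, c a = c e ↔ a = e ∨ a = e' := by
    intro a
    constructor
    · intro h
      by_cases hae : a = e
      · exact Or.inl hae
      · right
        have ha : a ∈ (Finset.univ.filter (fun a : Ω => c a = c e)).erase e := by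
          simp [hae, h]
        rw [he'] at ha; simpa using ha
    · rintro (rfl | rfl)
      · rfl
      · exact hce'
  have hμee : μ e ≠ e := hfix e
  -- part 1
  have part1 : ∀ a, c' a ≠ c e := by
    intro a
    rw [hc' a]
    split_ifs with h
    · intro hμ
      have hae' : (a : Ω) = e' := by
        rcases (hfiber a).mp h with h1 | h1
        · exact absurd h1 a.2.1
        · exact h1
      rcases (hfiber (μ e)).mp hμ with h1 | h1
      · exact hμee h1
      · exact a.2.2 (by rw [hae', ← h1])
    · exact h
  -- split the edge multiset of `G(𝒱, M)` into the part away from `{e, μ e}` and the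
  -- doubled matching edge `m`
  have hneg : Finset.univ.filter (fun a : Ω => ¬(a ≠ e ∧ a ≠ μ e)) = {e, μ e} := by
    ext a
    simp only [Finset.mem_filter, Finset.mem_univ, true_and, Finset.mem_insert,
      Finset.mem_singleton, not_and_or, not_not]
  have hnegval : (Finset.univ.filter (fun a : Ω => ¬(a ≠ e ∧ a ≠ μ e))).val
      = e ::ₘ {μ e} := by
    rw [hneg]
    rw [Finset.insert_val_of_notMem
      (by simp only [Finset.mem_singleton]; exact fun h => hμee h.symm)]
    rfl
  have hsplit : doubledEdges c μ
      = (Finset.univ.filter (fun a : Ω => a ≠ e ∧ a ≠ μ e)).val.map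
          (fun a => s(c a, c (μ a))) + Multiset.replicate 2 s(c e, c (μ e)) := by
    rw [doubledEdges, ← Multiset.filter_add_not (fun a : Ω => a ≠ e ∧ a ≠ μ e)
      Finset.univ.val, Multiset.map_add]
    congr 1
    rw [show (Multiset.filter (fun a : Ω => ¬(a ≠ e ∧ a ≠ μ e)) Finset.univ.val)
        = (Finset.univ.filter (fun a : Ω => ¬(a ≠ e ∧ a ≠ μ e))).val from rfl, hnegval]
    simp only [Multiset.map_cons, Multiset.map_singleton, hinv e,
      Multiset.replicate_succ, Multiset.replicate_zero]
    rw [Sym2.eq_swap]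
    rfl
  refine ⟨part1, ?_, ?_⟩
  · -- loop case : μ e = e'
    intro hme
    have hμee' : μ e = e' := by
      rcases (hfiber (μ e)).mp hme with h1 | h1
      · exact absurd h1 hμee
      · exact h1
    have hnotin : ∀ a : {a : Ω // a ≠ e ∧ a ≠ μ e}, c (a : Ω) ≠ c e := by
      intro a h
      rcases (hfiber a).mp h with h1 | h1
      · exact a.2.1 h1
      · exact a.2.2 (h1.trans hμee'.symm)
    have hmap : ∀ a : {a : Ω // a ≠ e ∧ a ≠ μ e},
        s(c' a, c' (μ' a)) = s(c (a : Ω), c (μ (a : Ω))) := by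
      intro a
      have h1 : c' a = c (a : Ω) := by rw [hc']; exact if_neg (hnotin a)
      have h2 : c' (μ' a) = c (μ (a : Ω)) := by
        rw [hc', hμ' a]; exact if_neg (hnotin (μ' a) ∘ (by rw [hμ' a]; exact id))
      rw [h1, h2]
    have hsub : doubledEdges c' μ'
        = (Finset.univ.filter (fun a : Ω => a ≠ e ∧ a ≠ μ e)).val.map
            (fun a => s(c a, c (μ a))) := by
      rw [doubledEdges, Multiset.map_congr rfl (fun a _ => hmap a),
        ← Finset.univ_val_map_subtype_val (fun a : Ω => a ≠ e ∧ a ≠ μ e),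
        Multiset.map_map]
      rfl
    rw [hsplit, hsub, hme]
  · -- subdivision case
    intro hme
    have he'neμ : e' ≠ μ e := fun h => hme (h ▸ hce' : c (μ e) = c e) |>.elim
    have hμe'e : μ e' ≠ e := fun h => he'neμ (by rw [← hinv e', h])
    have hμe'μe : μ e' ≠ μ e := fun h => he'ne (hinv.injective h)
    have hμe'e' : μ e' ≠ e' := hfix e'
    have hcμe' : c (μ e') ≠ c e := by
      intro h
      rcases (hfiber (μ e')).mp h with h1 | h1
      · exact hμe'e h1
      · exact hμe'e' h1
    refine ⟨e', he'ne, hce', ?_⟩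
    set E1 : {a : Ω // a ≠ e ∧ a ≠ μ e} := ⟨e', he'ne, he'neμ⟩ with hE1
    set E2 : {a : Ω // a ≠ e ∧ a ≠ μ e} := ⟨μ e', hμe'e, hμe'μe⟩ with hE2
    have hE1E2 : E1 ≠ E2 := fun h => hμe'e' (congrArg Subtype.val h).symm
    set R : Multiset {a : Ω // a ≠ e ∧ a ≠ μ e} :=
      ((Finset.univ : Finset {a : Ω // a ≠ e ∧ a ≠ μ e}).val.erase E1).erase E2 with hR
    have hE2mem : E2 ∈ (Finset.univ : Finset {a : Ω // a ≠ e ∧ a ≠ μ e}).val.erase E1 :=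
      (Multiset.mem_erase_of_ne (Ne.symm hE1E2)).mpr (Finset.mem_univ E2)
    have hU : (Finset.univ : Finset {a : Ω // a ≠ e ∧ a ≠ μ e}).val = E1 ::ₘ E2 ::ₘ R := by
      rw [hR, Multiset.cons_erase hE2mem, Multiset.cons_erase (Finset.mem_univ E1)]
    have hRnodup : ((Finset.univ : Finset {a : Ω // a ≠ e ∧ a ≠ μ e}).val.erase E1).Nodup :=
      Finset.univ.nodup.erase E1
    have hRmem : ∀ a ∈ R, a ≠ E1 ∧ a ≠ E2 := by
      intro a ha
      have h2 := hRnodup.mem_erase_iff.mp ha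
      have h1 := (Finset.univ.nodup.mem_erase_iff).mp h2.2
      exact ⟨h1.1, h2.1⟩
    -- on `R` the two edge maps agree
    have hmapR : R.map (fun a => s(c' a, c' (μ' a)))
        = R.map (fun a : {a : Ω // a ≠ e ∧ a ≠ μ e} => s(c (a : Ω), c (μ (a : Ω)))) := by
      refine Multiset.map_congr rfl ?_
      intro a ha
      obtain ⟨h1, h2⟩ := hRmem a ha
      have hca : c (a : Ω) ≠ c e := by
        intro h
        rcases (hfiber a).mp h with h3 | h3
        · exact a.2.1 h3
        · exact h1 (Subtype.ext h3)
      have hcμa : c (μ (a : Ω)) ≠ c e := by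
        intro h
        rcases (hfiber (μ (a : Ω))).mp h with h3 | h3
        · exact a.2.2 (by rw [← hinv (a : Ω), h3])
        · exact h2 (Subtype.ext (by rw [← hinv (a : Ω), h3]))
      have g1 : c' a = c (a : Ω) := by rw [hc']; exact if_neg hca
      have g2 : c' (μ' a) = c (μ (a : Ω)) := by
        rw [hc', hμ' a]; exact if_neg hcμa
      rw [g1, g2]
    -- compute the contracted edge multiset
    have hsubF : (Finset.univ.filter (fun a : Ω => a ≠ e ∧ a ≠ μ e)).val.map
          (fun a => s(c a, c (μ a)))
        = s(c e, c (μ e')) ::ₘ s(c e, c (μ e')) ::ₘ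
            R.map (fun a : {a : Ω // a ≠ e ∧ a ≠ μ e} => s(c (a : Ω), c (μ (a : Ω)))) := by
      rw [← Finset.univ_val_map_subtype_val (fun a : Ω => a ≠ e ∧ a ≠ μ e),
        Multiset.map_map, hU]
      simp only [Multiset.map_cons, Function.comp]
      congr 1
      · rw [hce']
      · congr 1
        rw [hinv e', hce']
        exact Sym2.eq_swap
    have hG : doubledEdges c' μ'
        = s(c (μ e), c (μ e')) ::ₘ s(c (μ e), c (μ e')) ::ₘ
            R.map (fun a : {a : Ω // a ≠ e ∧ a ≠ μ e} => s(c (a : Ω), c (μ (a : Ω)))) := by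
      rw [doubledEdges, hU]
      simp only [Multiset.map_cons, hmapR]
      congr 1
      · have g1 : c' E1 = c (μ e) := by rw [hc', hE1]; simp [hce']
        have g2 : c' (μ' E1) = c (μ e') := by
          rw [hc', hμ' E1, hE1]; exact if_neg hcμe'
        rw [g1, g2]
      · congr 1
        have g1 : c' E2 = c (μ e') := by rw [hc', hE2]; exact if_neg hcμe'
        have g2 : c' (μ' E2) = c (μ e) := by
          rw [hc', hμ' E2, hE2]
          simp only [hinv e']
          exact if_pos hce'
        rw [g1, g2]
        exact Sym2.eq_swap
    rw [hsplit, hsubF, hG]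
    simp only [Multiset.replicate_succ, Multiset.replicate_zero,
      ← Multiset.singleton_add, add_zero, Multiset.cons_zero]
    abel
end
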